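/- Let G be a left-compressed 3-graph on vertex set [t] with m edges, where C(t−1,3) ≤ m ≤ C(t−1,3) + C(t−2,2) − (t−2)/2, containing the maximum clique [t−2]^{(3)} and achieving λ(G) = λ^3_{(m,t−2)}. Let b = |E_{(t−1)t}|. Then either λ(G) < λ([t−1]^{(3)}) or |[t−2]^{(2)} \ E_t| ≤ b. -/

import Mathlib

open Finset

/-- The polynomial λ(G, w) = Σ_{e ∈ E} Π_{i ∈ e} w i. -/
def lagPoly (E : Finset (Finset ℕ)) (w : ℕ → ℝ) : ℝ :=
  ∑ e ∈ E, ∏ i ∈ e, w i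

/-- A feasible weighting on vertex set [n] = {0, …, n-1}. -/
def IsWeighting (n : ℕ) (w : ℕ → ℝ) : Prop :=
  (∀ i, 0 ≤ w i) ∧ (∀ i, n ≤ i → w i = 0) ∧ ∑ i ∈ Finset.range n, w i = 1

/-- The Lagrangian of a hypergraph with edge set `E`. -/
noncomputable def lag (E : Finset (Finset ℕ)) : ℝ :=
  sSup {x | ∃ n w, IsWeighting n w ∧ x = lagPoly E w}

/-- The complete r-uniform hypergraph on vertex set {0, …, t-1}. -/
def completeG (t r : ℕ) : Finset (Finset ℕ) :=
  (Finset.range t).powersetCard r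

/-- A hypergraph is left-compressed if replacing any vertex of an edge by a
smaller vertex (not already in the edge) again yields an edge. -/
def LeftCompressed (E : Finset (Finset ℕ)) : Prop :=
  ∀ e ∈ E, ∀ j ∈ e, ∀ i < j, i ∉ e → insert i (e.erase j) ∈ E

/-!
Shift the paper's vertices `t - 1, t` to `n, n + 1` and suppose `λ(G) ≥ λ([n+1]^(3))`. Being
left-compressed, `G` has a non-increasing optimal weighting `x`, and `x (n + 1) > 0`: otherwise
`[n+1]^(3)` would do at least as well as `G` on `x` itself, which the missing edge
`{n-2, n-1, n}` (or, if also `x n = 0`, the Lagrange condition of `[n+1]^(3)`) rules out. So `x`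
is positive and all partial derivatives of `λ(G, ·)` agree at `x`.

Let `Γ` and `Δ` be the weights of the pairs of `[n]` missing from the links of `n` and of `n + 1`,
and `S` the weight of `E_{n(n+1)}`. The Lagrange condition for `n, n + 1` gives
`Δ = Γ + (x n - x (n+1)) S`, and comparing `G` with `[n+1]^(3)` under the weighting that merges
`n + 1` into `n` gives `x n Γ + x (n+1) Δ ≤ x n x (n+1) S`. Each missing pair weighs at least
`(x n)²`, so more than `b` of them force `S ≥ (b + 1)(x n + x (n+1))`. The Lagrange conditions
for `k ∈ E_{n(n+1)}` against `n` make all these `x k` equal, and the resulting relations are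
inconsistent.
-/

namespace IsWeighting

variable {n : ℕ} {w : ℕ → ℝ}

theorem le_one (hw : IsWeighting n w) (i : ℕ) : w i ≤ 1 := by
  by_cases hi : i < n
  · exact hw.2.2 ▸ single_le_sum (fun j _ => hw.1 j) (mem_range.2 hi)
  · simp [hw.2.1 i (not_lt.1 hi)]

theorem add_single_sub_single (hw : IsWeighting n w) {k l : ℕ} (hk : k < n) (hl : l < n) {ε : ℝ}
    (hε : 0 ≤ ε) (hεl : ε ≤ w l) : IsWeighting n (w + Pi.single k ε - Pi.single l ε) := by
  refine ⟨fun i => ?_, fun i hi => ?_, ?_⟩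
  · rcases eq_or_ne i l with rfl | hil
    · simp only [Pi.add_apply, Pi.sub_apply, Pi.single_eq_same]
      have := Pi.single_apply k ε i
      split_ifs at this <;> linarith
    · simp only [Pi.add_apply, Pi.sub_apply, Pi.single_eq_of_ne hil, Pi.single_apply]
      split_ifs <;> linarith [hw.1 i]
  · simp [hw.2.1 i hi, Pi.single_eq_of_ne (show i ≠ k by omega),
      Pi.single_eq_of_ne (show i ≠ l by omega)]
  · simp [sum_add_distrib, sum_sub_distrib, hw.2.2, hk, hl]

end IsWeighting

theorem isWeighting_uniform (n : ℕ) (hn : 0 < n) :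
    IsWeighting n (fun i => if i < n then (n : ℝ)⁻¹ else 0) := by
  refine ⟨fun i => by positivity, fun i hi => if_neg (by omega), ?_⟩
  rw [sum_congr rfl fun i hi => if_pos (mem_range.1 hi)]
  simp [hn.ne']

theorem lagPoly_congr (E : Finset (Finset ℕ)) {w w' : ℕ → ℝ}
    (h : ∀ e ∈ E, ∀ i ∈ e, w i = w' i) : lagPoly E w = lagPoly E w' :=
  sum_congr rfl fun e he => prod_congr rfl (h e he)

theorem lagPoly_mono (E : Finset (Finset ℕ)) {w w' : ℕ → ℝ} (hw : ∀ i, 0 ≤ w i)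
    (h : ∀ e ∈ E, ∀ i ∈ e, w i ≤ w' i) : lagPoly E w ≤ lagPoly E w' :=
  sum_le_sum fun e he => prod_le_prod (fun i _ => hw i) (h e he)

theorem card_mul_pow_le_lagPoly {F : Finset (Finset ℕ)} {r : ℕ} {c : ℝ} {x : ℕ → ℝ}
    (hF : ∀ e ∈ F, e.card = r) (hc : 0 ≤ c) (h : ∀ e ∈ F, ∀ i ∈ e, c ≤ x i) :
    F.card * c ^ r ≤ lagPoly F x :=
  calc (F.card : ℝ) * c ^ r = ∑ e ∈ F, ∏ _i ∈ e, c := by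
        rw [sum_congr rfl fun e he => by rw [prod_const, hF e he], sum_const, nsmul_eq_mul]
    _ ≤ lagPoly F x := sum_le_sum fun e he => prod_le_prod (fun _ _ => hc) (h e he)

theorem lagPoly_le_card (E : Finset (Finset ℕ)) {n : ℕ} {w : ℕ → ℝ} (hw : IsWeighting n w) :
    lagPoly E w ≤ E.card :=
  calc lagPoly E w ≤ ∑ _e ∈ E, (1 : ℝ) :=
        sum_le_sum fun _ _ => prod_le_one (fun i _ => hw.1 i) fun i _ => hw.le_one i
    _ = E.card := by simp

theorem bddAbove_lagPoly (E : Finset (Finset ℕ)) :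
    BddAbove {x | ∃ n w, IsWeighting n w ∧ x = lagPoly E w} :=
  ⟨E.card, by rintro _ ⟨n, w, hw, rfl⟩; exact lagPoly_le_card E hw⟩

theorem lagPoly_le_lag (E : Finset (Finset ℕ)) {n : ℕ} {w : ℕ → ℝ} (hw : IsWeighting n w) :
    lagPoly E w ≤ lag E :=
  le_csSup (bddAbove_lagPoly E) ⟨n, w, hw, rfl⟩

theorem lag_le_lagPoly {E : Finset (Finset ℕ)} {x : ℕ → ℝ}
    (h : ∀ n w, IsWeighting n w → lagPoly E w ≤ lagPoly E x) : lag E ≤ lagPoly E x :=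
  csSup_le ⟨_, 1, _, isWeighting_uniform 1 one_pos, rfl⟩
    (by rintro _ ⟨n, w, hw, rfl⟩; exact h n w hw)

theorem lag_completeG_pos {m : ℕ} (hm : 3 ≤ m) : 0 < lag (completeG m 3) := by
  have hmem : ({0, 1, 2} : Finset ℕ) ∈ completeG m 3 := by
    simp only [completeG, mem_powersetCard]
    refine ⟨fun i hi => ?_, rfl⟩
    simp only [mem_insert, mem_singleton] at hi
    simp only [mem_range]; omega
  have hw := isWeighting_uniform 3 (by norm_num)
  calc (0 : ℝ) < ∏ i ∈ ({0, 1, 2} : Finset ℕ), (if i < 3 then ((3 : ℕ) : ℝ)⁻¹ else 0) := by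
        simp
    _ ≤ lagPoly (completeG m 3) _ :=
        single_le_sum (f := fun e => ∏ i ∈ e, _) (fun e _ => prod_nonneg fun i _ => hw.1 i) hmem
    _ ≤ _ := lagPoly_le_lag _ hw

/-- The partial derivative `∂λ(E, w)/∂w_k`. -/
def partialLag (E : Finset (Finset ℕ)) (k : ℕ) (w : ℕ → ℝ) : ℝ :=
  ∑ e ∈ E with k ∈ e, ∏ i ∈ e.erase k, w i

def linkSum (E : Finset (Finset ℕ)) (k l : ℕ) (w : ℕ → ℝ) : ℝ :=
  ∑ e ∈ E with k ∈ e ∧ l ∉ e, ∏ i ∈ e.erase k, w i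

def coLinkSum (E : Finset (Finset ℕ)) (k l : ℕ) (w : ℕ → ℝ) : ℝ :=
  ∑ e ∈ E with k ∈ e ∧ l ∈ e, ∏ i ∈ (e.erase k).erase l, w i

section Perturbation

variable {E : Finset (Finset ℕ)} {k l : ℕ} {w : ℕ → ℝ}

theorem coLinkSum_nonneg (hw : ∀ i, 0 ≤ w i) : 0 ≤ coLinkSum E k l w :=
  sum_nonneg fun _ _ => prod_nonneg fun i _ => hw i

theorem coLinkSum_comm : coLinkSum E k l w = coLinkSum E l k w := by
  unfold coLinkSum
  rw [filter_congr fun e _ => and_comm]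
  exact sum_congr rfl fun e _ => by rw [erase_right_comm]

theorem partialLag_eq_linkSum_add (hkl : k ≠ l) :
    partialLag E k w = linkSum E k l w + w l * coLinkSum E k l w := by
  rw [partialLag, ← sum_filter_not_add_sum_filter _ (l ∈ ·), filter_filter, filter_filter,
    coLinkSum, mul_sum]
  refine congrArg₂ (· + ·) rfl (sum_congr rfl fun e he => ?_)
  have hl : l ∈ e.erase k := mem_erase.2 ⟨hkl.symm, (mem_filter.1 he).2.2⟩
  rw [mul_prod_erase _ _ hl]

theorem prod_add_single_sub_single (hkl : k ≠ l) (ε : ℝ) (e : Finset ℕ) :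
    ∏ i ∈ e, (w + Pi.single k ε - Pi.single l ε : ℕ → ℝ) i
      = ∏ i ∈ e, w i
        + ε * ((if k ∈ e then ∏ i ∈ e.erase k, w i else 0)
          - if l ∈ e then ∏ i ∈ e.erase l, w i else 0)
        - ε ^ 2 * (if k ∈ e ∧ l ∈ e then ∏ i ∈ (e.erase k).erase l, w i else 0) := by
  set w' := w + Pi.single k ε - Pi.single l ε
  have hk' : w' k = w k + ε := by simp [w', Pi.single_eq_of_ne hkl]
  have hl' : w' l = w l - ε := by simp [w', Pi.single_eq_of_ne hkl.symm]
  have off : ∀ s : Finset ℕ, k ∉ s → l ∉ s → ∏ i ∈ s, w' i = ∏ i ∈ s, w i := fun s hks hls =>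
    prod_congr rfl fun i hi => by
      simp [w', Pi.single_eq_of_ne (ne_of_mem_of_not_mem hi hks),
        Pi.single_eq_of_ne (ne_of_mem_of_not_mem hi hls)]
  by_cases hk : k ∈ e <;> by_cases hl : l ∈ e <;>
    simp only [hk, hl, if_true, if_false, and_true, and_false]
  · have hlk : l ∈ e.erase k := mem_erase.2 ⟨hkl.symm, hl⟩
    have hr := off ((e.erase k).erase l) (by simp) (by simp)
    have hkl' : ∏ i ∈ e.erase l, w i = w k * ∏ i ∈ (e.erase k).erase l, w i := by
      rw [← mul_prod_erase (e.erase l) w (mem_erase.2 ⟨hkl, hk⟩), erase_right_comm]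
    rw [← mul_prod_erase _ _ hk, ← mul_prod_erase _ _ hlk, ← mul_prod_erase e w hk,
      ← mul_prod_erase _ w hlk, hkl', hr, hk', hl']
    ring
  · rw [← mul_prod_erase _ _ hk, ← mul_prod_erase e w hk,
      off _ (notMem_erase k e) (fun h => hl (mem_of_mem_erase h)), hk']
    ring
  · rw [← mul_prod_erase _ _ hl, ← mul_prod_erase e w hl,
      off _ (fun h => hk (mem_of_mem_erase h)) (notMem_erase l e), hl']
    ring
  · rw [off e hk hl]; ring

theorem lagPoly_add_single_sub_single (hkl : k ≠ l) (ε : ℝ) :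
    lagPoly E (w + Pi.single k ε - Pi.single l ε)
      = lagPoly E w + ε * (partialLag E k w - partialLag E l w)
        - ε ^ 2 * coLinkSum E k l w := by
  simp only [lagPoly, partialLag, coLinkSum, sum_filter, prod_add_single_sub_single hkl,
    sum_add_distrib, sum_sub_distrib, mul_sub, mul_sum]

theorem linkSum_le_linkSum (hlc : LeftCompressed E) {i j : ℕ} (hij : i < j)
    (hw : ∀ a, 0 ≤ w a) : linkSum E j i w ≤ linkSum E i j w := by
  set A := E.filter fun e => j ∈ e ∧ i ∉ e
  have hi : ∀ e ∈ A, i ∉ e.erase j := fun e he h => (mem_filter.1 he).2.2 (mem_of_mem_erase h)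
  have hinj : Set.InjOn (fun e : Finset ℕ => insert i (e.erase j)) A := by
    intro e₁ he₁ e₂ he₂ h
    have := congrArg (fun s => insert j (s.erase i)) h
    simpa [erase_insert (hi e₁ he₁), erase_insert (hi e₂ he₂),
      insert_erase (mem_filter.1 he₁).2.1, insert_erase (mem_filter.1 he₂).2.1] using this
  calc linkSum E j i w = ∑ e ∈ A, ∏ a ∈ (insert i (e.erase j)).erase i, w a :=
        sum_congr rfl fun e he => by rw [erase_insert (hi e he)]
    _ = ∑ s ∈ A.image fun e => insert i (e.erase j), ∏ a ∈ s.erase i, w a :=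
        (sum_image (f := fun s => ∏ a ∈ s.erase i, w a) hinj).symm
    _ ≤ linkSum E i j w := by
        refine sum_le_sum_of_subset_of_nonneg (fun s hs => ?_)
          fun s _ _ => prod_nonneg fun a _ => hw a
        obtain ⟨e, he, rfl⟩ := mem_image.1 hs
        obtain ⟨heE, hje, hie⟩ := mem_filter.1 he
        exact mem_filter.2 ⟨hlc e heE j hje i hij hie, mem_insert_self _ _, by simp [hij.ne']⟩

end Perturbation

open Filter Topology in
theorem nonpos_of_forall_le_mul {c q δ : ℝ} (hδ : 0 < δ)
    (h : ∀ ε, 0 < ε → ε ≤ δ → c ≤ ε * q) : c ≤ 0 := by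
  have : Tendsto (fun ε : ℝ => ε * q) (𝓝[>] 0) (𝓝 0) := by
    simpa using (tendsto_nhdsWithin_of_tendsto_nhds (tendsto_id (x := 𝓝 (0 : ℝ)))
      (s := Set.Ioi 0)).mul_const q
  exact ge_of_tendsto this (by filter_upwards [Ioc_mem_nhdsGT hδ] with ε hε using h ε hε.1 hε.2)

section Optimality

variable {E : Finset (Finset ℕ)} {k l m : ℕ} {x : ℕ → ℝ}

theorem partialLag_le_of_isMax (hx : IsWeighting m x)
    (hmax : ∀ w, IsWeighting m w → lagPoly E w ≤ lagPoly E x) (hk : k < m) (hl : l < m)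
    (hxl : 0 < x l) : partialLag E k x ≤ partialLag E l x := by
  rcases eq_or_ne k l with rfl | hkl
  · rfl
  suffices partialLag E k x - partialLag E l x ≤ 0 by linarith
  refine nonpos_of_forall_le_mul (q := coLinkSum E k l x) hxl fun ε hε hεl =>
    le_of_mul_le_mul_left ?_ hε
  have h := hmax _ (hx.add_single_sub_single hk hl hε.le hεl)
  rw [lagPoly_add_single_sub_single hkl] at h
  linarith

theorem partialLag_eq_of_isMax (hx : IsWeighting m x)
    (hmax : ∀ w, IsWeighting m w → lagPoly E w ≤ lagPoly E x) (hk : k < m) (hl : l < m)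
    (hxk : 0 < x k) (hxl : 0 < x l) : partialLag E k x = partialLag E l x :=
  (partialLag_le_of_isMax hx hmax hk hl hxl).antisymm (partialLag_le_of_isMax hx hmax hl hk hxk)

theorem LeftCompressed.lagPoly_le_add_single_sub_single (hlc : LeftCompressed E) {i j : ℕ}
    (hij : i < j) (hx : ∀ a, 0 ≤ x a) {ε : ℝ} (hε : 0 ≤ ε) (hεij : ε ≤ x j - x i) :
    lagPoly E x ≤ lagPoly E (x + Pi.single i ε - Pi.single j ε) := by
  rw [lagPoly_add_single_sub_single hij.ne, partialLag_eq_linkSum_add hij.ne,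
    partialLag_eq_linkSum_add hij.ne', coLinkSum_comm (k := j)]
  have hL := linkSum_le_linkSum hlc hij hx
  have hQ := coLinkSum_nonneg (E := E) (k := i) (l := j) hx
  nlinarith [mul_nonneg hε (mul_nonneg hQ (sub_nonneg.2 hεij)), mul_nonneg hε (sub_nonneg.2 hL)]

end Optimality

theorem isCompact_setOf_isWeighting (t : ℕ) : IsCompact {w : ℕ → ℝ | IsWeighting t w} := by
  have hclosed : IsClosed {w : ℕ → ℝ | IsWeighting t w} := by
    simp only [IsWeighting, Set.ofPred_and, Set.ofPred_forall]
    exact (isClosed_iInter fun i => isClosed_le continuous_const (continuous_apply i)).inter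
      ((isClosed_iInter fun i => isClosed_iInter fun _ =>
        isClosed_eq (continuous_apply i) continuous_const).inter
        (isClosed_eq (continuous_finsetSum _ fun i _ => continuous_apply i) continuous_const))
  exact (isCompact_univ_pi fun _ => isCompact_Icc).of_isClosed_subset hclosed
    fun w hw => Set.mem_univ_pi.2 fun i => ⟨hw.1 i, hw.le_one i⟩

theorem continuous_lagPoly (E : Finset (Finset ℕ)) : Continuous (lagPoly E) :=
  continuous_finsetSum _ fun _ _ => continuous_finsetProd _ fun i _ => continuous_apply i

section Existence

variable {E : Finset (Finset ℕ)} {t : ℕ}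

theorem exists_isWeighting_lagPoly_le (hE : ∀ e ∈ E, e ⊆ range t) (ht : 0 < t) {n : ℕ}
    {w : ℕ → ℝ} (hw : IsWeighting n w) : ∃ w', IsWeighting t w' ∧ lagPoly E w ≤ lagPoly E w' := by
  set w' : ℕ → ℝ := (fun i => if i < t then w i else 0) + Pi.single 0 (∑ i ∈ Ico t n, w i)
  have hextra : 0 ≤ ∑ i ∈ Ico t n, w i := sum_nonneg fun i _ => hw.1 i
  refine ⟨w', ⟨fun i => ?_, fun i hi => ?_, ?_⟩, lagPoly_mono E hw.1 fun e he i hi => ?_⟩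
  · have := hw.1 i
    simp only [w', Pi.add_apply, Pi.single_apply]
    split_ifs <;> linarith
  · simp [w', Pi.single_apply, hi.not_gt]
    omega
  · simp only [w', Pi.add_apply, sum_add_distrib, sum_pi_single', mem_range, ht, if_true,
      sum_ite_of_true fun i hi => mem_range.1 hi]
    rcases le_total t n with htn | hnt
    · rw [sum_range_add_sum_Ico _ htn, hw.2.2]
    · rw [Ico_eq_empty_of_le hnt, sum_empty, add_zero, ← sum_range_add_sum_Ico _ hnt,
        sum_eq_zero fun i hi => hw.2.1 i (mem_Ico.1 hi).1, add_zero, hw.2.2]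
  · have hit : i < t := mem_range.1 (hE e he hi)
    simp only [w', Pi.add_apply, if_pos hit, Pi.single_apply]
    split_ifs <;> linarith

/-- Among the maximizers of `lagPoly E` on the simplex over `[t]`, one minimizing `∑ i * x i` is
antitone: otherwise shifting weight to a smaller vertex keeps it a maximizer and lowers the sum. -/
theorem LeftCompressed.exists_antitone_lagPoly_eq_lag (hlc : LeftCompressed E)
    (hE : ∀ e ∈ E, e ⊆ range t) (ht : 0 < t) :
    ∃ x, IsWeighting t x ∧ Antitone x ∧ lagPoly E x = lag E := by
  obtain ⟨x₁, hx₁, hmax₁⟩ := (isCompact_setOf_isWeighting t).exists_isMaxOn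
    ⟨_, isWeighting_uniform t ht⟩ (continuous_lagPoly E).continuousOn
  set A := {w | IsWeighting t w} ∩ lagPoly E ⁻¹' {lagPoly E x₁}
  have hA : IsCompact A := (isCompact_setOf_isWeighting t).inter_right
    (isClosed_singleton.preimage (continuous_lagPoly E))
  obtain ⟨x, ⟨hx, hxval⟩, hmin⟩ :=
    hA.exists_isMinOn (f := fun w => ∑ i ∈ range t, (i : ℝ) * w i) ⟨x₁, hx₁, rfl⟩ (by fun_prop)
  rw [Set.mem_preimage, Set.mem_singleton_iff] at hxval
  have hmax : ∀ w, IsWeighting t w → lagPoly E w ≤ lagPoly E x := fun w hw => hxval ▸ hmax₁ hw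
  refine ⟨x, hx, fun i j hij => ?_,
    le_antisymm (lagPoly_le_lag E hx) (lag_le_lagPoly fun n w hw => ?_)⟩
  · by_contra! hlt
    have hij' : i < j := lt_of_le_of_ne hij (by rintro rfl; exact lt_irrefl _ hlt)
    have hj : j < t := by
      by_contra! h
      linarith [hx.2.1 j h, hx.1 i]
    have hw :=
      hx.add_single_sub_single (hij'.trans hj) hj (sub_nonneg.2 hlt.le) (by linarith [hx.1 i])
    have hle := hlc.lagPoly_le_add_single_sub_single hij' hx.1 (sub_nonneg.2 hlt.le) le_rfl
    have := hmin ⟨hw, ((hmax _ hw).antisymm hle).trans hxval⟩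
    simp only [Set.mem_ofPred_eq, Pi.add_apply, Pi.sub_apply, mul_add, mul_sub, sum_add_distrib,
      sum_sub_distrib, Pi.single_apply, mul_ite, mul_zero, sum_ite_eq', mem_range, hj,
      hij'.trans hj, if_true] at this
    have : (i : ℝ) < j := by exact_mod_cast hij'
    nlinarith
  · obtain ⟨w', hw', hle⟩ := exists_isWeighting_lagPoly_le hE ht hw
    exact hle.trans (hmax w' hw')

end Existence

theorem Finset.sum_powersetCard_succ_insert {α M : Type*} [DecidableEq α] [AddCommMonoid M]
    {a : α} {s : Finset α} (ha : a ∉ s) (r : ℕ) (f : Finset α → M) :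
    ∑ e ∈ (insert a s).powersetCard (r + 1), f e
      = ∑ e ∈ s.powersetCard (r + 1), f e + ∑ e ∈ s.powersetCard r, f (insert a e) := by
  rw [powersetCard_succ_insert ha, sum_union, sum_image]
  · exact insert_erase_invOn.2.injOn.mono fun e he => notMem_mono (mem_powersetCard.1 he).1 ha
  · aesop (add simp [disjoint_left, insert_subset_iff])

section SubsetSums

variable {a r : ℕ} {s : Finset ℕ} {w : ℕ → ℝ}

theorem lagPoly_filter_powersetCard_insert (ha : a ∉ s) (P : Finset ℕ → Prop)
    [DecidablePred P] :
    lagPoly (((insert a s).powersetCard (r + 1)).filter P) w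
      = lagPoly ((s.powersetCard (r + 1)).filter P) w
        + w a * lagPoly ((s.powersetCard r).filter fun q => P (insert a q)) w := by
  simp only [lagPoly, sum_filter, sum_powersetCard_succ_insert ha, mul_sum, mul_ite, mul_zero]
  refine congrArg₂ (· + ·) rfl (sum_congr rfl fun q hq => ?_)
  rw [prod_insert (notMem_mono (mem_powersetCard.1 hq).1 ha)]

theorem lagPoly_powersetCard_insert (ha : a ∉ s) :
    lagPoly ((insert a s).powersetCard (r + 1)) w
      = lagPoly (s.powersetCard (r + 1)) w + w a * lagPoly (s.powersetCard r) w := by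
  simpa using lagPoly_filter_powersetCard_insert (r := r) (w := w) ha fun _ => True

theorem lagPoly_filter_powersetCard_one (P : Finset ℕ → Prop) [DecidablePred P] :
    lagPoly ((s.powersetCard 1).filter P) w = ∑ i ∈ s with P {i}, w i := by
  simp [lagPoly, powersetCard_one, filter_map]

theorem lagPoly_powersetCard_one : lagPoly (s.powersetCard 1) w = ∑ i ∈ s, w i := by
  simpa using lagPoly_filter_powersetCard_one (s := s) (w := w) fun _ => True

theorem lagPoly_powersetCard_zero : lagPoly (s.powersetCard 0) w = 1 := by
  simp [lagPoly]

theorem lagPoly_eq_lagPoly_filter {E S : Finset (Finset ℕ)} (hE : E ⊆ S) :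
    lagPoly E w = lagPoly (S.filter (· ∈ E)) w := by
  rw [filter_mem_eq_inter, inter_eq_right.2 hE]

theorem partialLag_eq_lagPoly {E : Finset (Finset ℕ)} (hE : E ⊆ s.powersetCard (r + 1))
    (k : ℕ) : partialLag E k w = lagPoly (((s.erase k).powersetCard r).filter
      fun q => insert k q ∈ E) w := by
  refine sum_nbij' (fun e => e.erase k) (fun q => insert k q) (fun e he => ?_) (fun q hq => ?_)
    (fun e he => ?_) (fun q hq => ?_) fun _ _ => rfl
  · obtain ⟨heE, hke⟩ := mem_filter.1 (mem_coe.1 he)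
    obtain ⟨hes, hcard⟩ := mem_powersetCard.1 (hE heE)
    simpa [insert_erase hke, heE, card_erase_of_mem hke, hcard] using erase_subset_erase k hes
  · obtain ⟨hq, hqE⟩ := mem_filter.1 (mem_coe.1 hq)
    simpa using hqE
  · exact insert_erase (mem_filter.1 (mem_coe.1 he)).2
  · obtain ⟨hq, -⟩ := mem_filter.1 (mem_coe.1 hq)
    exact erase_insert fun hk => by simpa using (mem_powersetCard.1 hq).1 hk

end SubsetSums

theorem Finset.exists_eq_triple_of_card_eq_three {s : Finset ℕ} (h : s.card = 3) :
    ∃ a b c, a < b ∧ b < c ∧ s = {a, b, c} := by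
  set f := s.orderEmbOfFin h
  refine ⟨f 0, f 1, f 2, f.strictMono (by decide), f.strictMono (by decide), ?_⟩
  ext x
  have hx : x ∈ Set.range f ↔ x ∈ s := by rw [s.range_orderEmbOfFin h, mem_coe]
  simp [← hx, Fin.exists_fin_succ, eq_comm]

section LeftCompressed

variable {E : Finset (Finset ℕ)}

theorem LeftCompressed.insert_erase_mem (hlc : LeftCompressed E) {e : Finset ℕ} (he : e ∈ E)
    {i j : ℕ} (hj : j ∈ e) (hij : i ≤ j) (hi : i ∉ e.erase j) : insert i (e.erase j) ∈ E := by
  rcases hij.lt_or_eq with hij | rfl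
  · exact hlc e he j hj i hij fun h => hi (mem_erase.2 ⟨hij.ne, h⟩)
  · rwa [insert_erase hj]

theorem LeftCompressed.triple_mem_of_le (hlc : LeftCompressed E) {a b c a' b' c' : ℕ}
    (h : {a, b, c} ∈ E) (hab : a < b) (hbc : b < c) (ha'b' : a' < b') (hb'c' : b' < c')
    (ha : a' ≤ a) (hb : b' ≤ b) (hc : c' ≤ c) : {a', b', c'} ∈ E := by
  have h₁ : ({a', b, c} : Finset ℕ) ∈ E := by
    convert hlc.insert_erase_mem h (j := a) (by simp) ha (by simp; omega) using 1
    ext; simp; omega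
  have h₂ : ({a', b', c} : Finset ℕ) ∈ E := by
    convert hlc.insert_erase_mem h₁ (j := b) (by simp) hb (by simp; omega) using 1
    ext; simp; omega
  convert hlc.insert_erase_mem h₂ (j := c) (by simp) hc (by simp; omega) using 1
  ext; simp; omega

theorem LeftCompressed.insert_mem_of_triple_mem (hlc : LeftCompressed E) {k n : ℕ} (hk : k < n)
    (hkE : {k, n, n + 1} ∈ E) {q : Finset ℕ} (hq : q ⊆ range (n + 2)) (hcard : q.card = 2)
    (hkq : k ∉ q) : insert k q ∈ E := by
  obtain ⟨a, b, c, hab, hbc, he⟩ :=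
    exists_eq_triple_of_card_eq_three (by rw [card_insert_of_notMem hkq, hcard])
  have hk' : k ∈ ({a, b, c} : Finset ℕ) := he ▸ mem_insert_self k q
  have hc : c ∈ insert k q := he ▸ by simp
  have hc' : c < n + 2 := by
    rcases mem_insert.1 hc with rfl | hc
    · omega
    · exact mem_range.1 (hq hc)
  rw [he]
  simp only [mem_insert, mem_singleton] at hk'
  exact hlc.triple_mem_of_le hkE hk (by omega) hab hbc (by omega) (by omega) (by omega)

theorem LeftCompressed.triple_notMem (hlc : LeftCompressed E) {n : ℕ} (hn : 2 ≤ n)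
    (hmaxcl : ∀ s : Finset ℕ, s.powersetCard 3 ⊆ E → s.card ≤ n) : {n - 2, n - 1, n} ∉ E := by
  intro h
  have hcl : (range (n + 1)).powersetCard 3 ⊆ E := fun e he => by
    obtain ⟨hsub, hcard⟩ := mem_powersetCard.1 he
    obtain ⟨a, b, c, hab, hbc, rfl⟩ := exists_eq_triple_of_card_eq_three hcard
    have : c < n + 1 := mem_range.1 (hsub (by simp))
    exact hlc.triple_mem_of_le h (by omega) (by omega) hab hbc (by omega) (by omega) (by omega)
  simpa using hmaxcl _ hcl

end LeftCompressed

/- With vertices `0, …, n + 1` (so `t = n + 2`), `link E (range n) (n + 1)` is the paper's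
`E_t ∩ [t-2]^(2)` and `pairLink E n` is `E_{(t-1)t}`. -/
def link (E : Finset (Finset ℕ)) (s : Finset ℕ) (a : ℕ) : Finset (Finset ℕ) :=
  (s.powersetCard 2).filter fun q => insert a q ∈ E

def nonLink (E : Finset (Finset ℕ)) (s : Finset ℕ) (a : ℕ) : Finset (Finset ℕ) :=
  (s.powersetCard 2).filter fun q => insert a q ∉ E

def pairLink (E : Finset (Finset ℕ)) (n : ℕ) : Finset ℕ :=
  (range n).filter fun i => {i, n, n + 1} ∈ E

theorem lagPoly_link_add_lagPoly_nonLink (E : Finset (Finset ℕ)) (s : Finset ℕ) (a : ℕ)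
    (w : ℕ → ℝ) :
    lagPoly (link E s a) w + lagPoly (nonLink E s a) w = lagPoly (s.powersetCard 2) w :=
  sum_filter_add_sum_filter_not _ _ _

theorem lagPoly_powersetCard_two_eq {s : Finset ℕ} {k : ℕ} (hk : k ∈ s) (w : ℕ → ℝ) :
    lagPoly (s.powersetCard 2) w
      = lagPoly ((s.erase k).powersetCard 2) w + w k * ∑ i ∈ s.erase k, w i := by
  conv_lhs => rw [← insert_erase hk]
  rw [lagPoly_powersetCard_insert (notMem_erase k s), lagPoly_powersetCard_one]

section TopPair

variable {n : ℕ} {E : Finset (Finset ℕ)} (x : ℕ → ℝ)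

theorem pairLink_eq_filter_last : pairLink E n = (range n).filter fun i => {n + 1, n, i} ∈ E :=
  filter_congr fun i _ => by
    rw [show ({n + 1, n, i} : Finset ℕ) = {i, n, n + 1} by ext; simp; omega]

theorem pairLink_eq_filter_penultimate :
    pairLink E n = (range n).filter fun i => {n, n + 1, i} ∈ E :=
  filter_congr fun i _ => by
    rw [show ({n, n + 1, i} : Finset ℕ) = {i, n, n + 1} by ext; simp; omega]

theorem lagPoly_eq_of_subset_powersetCard (hE : E ⊆ (range (n + 2)).powersetCard 3)
    (hcl : (range n).powersetCard 3 ⊆ E) :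
    lagPoly E x = lagPoly ((range n).powersetCard 3) x + x n * lagPoly (link E (range n) n) x
      + x (n + 1) * (lagPoly (link E (range n) (n + 1)) x + x n * ∑ i ∈ pairLink E n, x i) := by
  rw [lagPoly_eq_lagPoly_filter hE, range_add_one, range_add_one,
    lagPoly_filter_powersetCard_insert (by simp), lagPoly_filter_powersetCard_insert (by simp),
    lagPoly_filter_powersetCard_insert (by simp), lagPoly_filter_powersetCard_one,
    filter_true_of_mem hcl, ← pairLink_eq_filter_last]
  rfl

theorem partialLag_penultimate (hE : E ⊆ (range (n + 2)).powersetCard 3) :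
    partialLag E n x = lagPoly (link E (range n) n) x + x (n + 1) * ∑ i ∈ pairLink E n, x i := by
  rw [partialLag_eq_lagPoly hE, show (range (n + 2)).erase n = insert (n + 1) (range n) by
      ext; simp; omega,
    lagPoly_filter_powersetCard_insert (by simp), lagPoly_filter_powersetCard_one,
    ← pairLink_eq_filter_penultimate]
  rfl

theorem partialLag_last (hE : E ⊆ (range (n + 2)).powersetCard 3) :
    partialLag E (n + 1) x
      = lagPoly (link E (range n) (n + 1)) x + x n * ∑ i ∈ pairLink E n, x i := by
  rw [partialLag_eq_lagPoly hE, show (range (n + 2)).erase (n + 1) = insert n (range n) by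
      ext; simp; omega,
    lagPoly_filter_powersetCard_insert (by simp), lagPoly_filter_powersetCard_one,
    ← pairLink_eq_filter_last]
  rfl

theorem partialLag_of_mem_pairLink (hE : E ⊆ (range (n + 2)).powersetCard 3)
    (hlc : LeftCompressed E) {k : ℕ} (hk : k ∈ pairLink E n) :
    partialLag E k x = lagPoly (((range n).erase k).powersetCard 2) x
      + (x n + x (n + 1)) * ∑ i ∈ (range n).erase k, x i + x n * x (n + 1) := by
  obtain ⟨hkn, hkE⟩ := mem_filter.1 hk
  have hk' := mem_range.1 hkn
  have hlink : ∀ q ∈ ((range (n + 2)).erase k).powersetCard 2, insert k q ∈ E := fun q hq => by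
    obtain ⟨hq, hcard⟩ := mem_powersetCard.1 hq
    exact hlc.insert_mem_of_triple_mem hk' hkE (subset_erase.1 hq).1 hcard
      (subset_erase.1 hq).2
  rw [partialLag_eq_lagPoly hE, filter_true_of_mem hlink,
    show (range (n + 2)).erase k = insert (n + 1) (insert n ((range n).erase k)) by
      ext; simp; omega,
    lagPoly_powersetCard_insert (by simp), lagPoly_powersetCard_insert (by simp),
    lagPoly_powersetCard_insert (by simp), lagPoly_powersetCard_one, lagPoly_powersetCard_zero]
  ring

end TopPair

section Complete

variable {n k : ℕ} (x : ℕ → ℝ)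

theorem lagPoly_completeG_succ :
    lagPoly (completeG (n + 1) 3) x
      = lagPoly ((range n).powersetCard 3) x + x n * lagPoly ((range n).powersetCard 2) x := by
  rw [completeG, range_add_one, lagPoly_powersetCard_insert (by simp)]

theorem partialLag_completeG (hk : k < n) :
    partialLag (completeG n 3) k x = lagPoly (((range n).erase k).powersetCard 2) x := by
  rw [partialLag_eq_lagPoly (E := completeG n 3) (s := range n) (r := 2) subset_rfl,
    filter_true_of_mem fun q hq => ?_]
  obtain ⟨hq, hcard⟩ := mem_powersetCard.1 hq
  refine mem_powersetCard.2 ⟨insert_subset (mem_range.2 hk) (subset_erase.1 hq).1, ?_⟩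
  rw [card_insert_of_notMem (subset_erase.1 hq).2, hcard]

end Complete

theorem IsWeighting.pos_zero_of_antitone {m : ℕ} {x : ℕ → ℝ} (hx : IsWeighting m x)
    (hanti : Antitone x) : 0 < x 0 := by
  by_contra! h
  have : ∑ i ∈ range m, x i ≤ 0 := sum_nonpos fun i _ => (hanti (Nat.zero_le i)).trans h
  linarith [hx.2.2]

section Argument

variable {n m : ℕ} {E : Finset (Finset ℕ)} {x : ℕ → ℝ}

/-- If `x n = 0`, the Lagrange condition `∂ₙ ≤ ∂₀` forces all weight onto vertex `0`, where
`lagPoly (completeG (n + 1) 3)` vanishes. -/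
theorem pos_of_lag_completeG_le (hn : 2 ≤ n) (hx : IsWeighting m x) (hnm : n < m)
    (hanti : Antitone x) (hopt : lag (completeG (n + 1) 3) ≤ lagPoly (completeG (n + 1) 3) x) :
    0 < x n := by
  by_contra! hv
  have hmax : ∀ w, IsWeighting m w → lagPoly (completeG (n + 1) 3) w
      ≤ lagPoly (completeG (n + 1) 3) x := fun w hw => (lagPoly_le_lag _ hw).trans hopt
  have h0 := hx.pos_zero_of_antitone hanti
  have hkkt := partialLag_le_of_isMax (k := n) (l := 0) hx hmax hnm (by omega) h0
  rw [partialLag_completeG x (by omega), partialLag_completeG x (by omega),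
    show (range (n + 1)).erase n = range n by ext; simp; omega,
    show (range (n + 1)).erase 0 = insert n ((range n).erase 0) by ext; simp; omega,
    lagPoly_powersetCard_insert (by simp), lagPoly_powersetCard_two_eq (k := 0) (by simp; omega),
    le_antisymm hv (hx.1 n), zero_mul, add_zero, add_le_iff_nonpos_right] at hkkt
  have hσ : x 1 ≤ ∑ i ∈ (range n).erase 0, x i :=
    single_le_sum (fun i _ => hx.1 i) (by simp; omega)
  have hx1 : x 1 ≤ 0 := by nlinarith
  have hzero : lagPoly (completeG (n + 1) 3) x = 0 := sum_eq_zero fun e he => by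
    obtain ⟨i, hi, hi0⟩ := exists_mem_ne (by rw [(mem_powersetCard.1 he).2]; norm_num) 0
    exact prod_eq_zero hi ((hanti (by omega)).trans hx1 |>.antisymm (hx.1 i))
  linarith [lag_completeG_pos (m := n + 1) (by omega)]

theorem LeftCompressed.weight_last_pos (hlc : LeftCompressed E)
    (hE : E ⊆ (range (n + 2)).powersetCard 3) (hcl : (range n).powersetCard 3 ⊆ E)
    (hmaxcl : ∀ s : Finset ℕ, s.powersetCard 3 ⊆ E → s.card ≤ n) (hn : 2 ≤ n)
    (hx : IsWeighting (n + 2) x) (hanti : Antitone x) (hxE : lagPoly E x = lag E)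
    (hK : lag (completeG (n + 1) 3) ≤ lag E) : 0 < x (n + 1) := by
  by_contra! hu
  have hD := lagPoly_eq_of_subset_powersetCard x hE hcl
  rw [le_antisymm hu (hx.1 _), zero_mul, add_zero] at hD
  have hKE : lagPoly (completeG (n + 1) 3) x ≤ lagPoly E x :=
    (lagPoly_le_lag _ hx).trans (hK.trans hxE.ge)
  rcases (hx.1 n).lt_or_eq with hv | hv
  · have hpair : ({n - 2, n - 1} : Finset ℕ) ∈ nonLink E (range n) n := by
      refine mem_filter.2 ⟨mem_powersetCard.2 ⟨fun i hi => ?_, card_pair (by omega)⟩, ?_⟩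
      · simp only [mem_insert, mem_singleton] at hi
        simp only [mem_range]; omega
      · rw [show insert n {n - 2, n - 1} = {n - 2, n - 1, n} by ext; simp; omega]
        exact hlc.triple_notMem hn hmaxcl
    have hΓ : x (n - 2) * x (n - 1) ≤ lagPoly (nonLink E (range n) n) x := by
      have := single_le_sum (f := fun e => ∏ i ∈ e, x i)
        (fun e _ => prod_nonneg fun i _ => hx.1 i) hpair
      rwa [prod_pair (by omega)] at this
    have hpos : 0 < x (n - 2) * x (n - 1) :=
      mul_pos (hv.trans_le (hanti (by omega))) (hv.trans_le (hanti (by omega)))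
    rw [lagPoly_completeG_succ, hD, ← lagPoly_link_add_lagPoly_nonLink E (range n) n] at hKE
    nlinarith
  · refine (pos_of_lag_completeG_le hn hx (by omega) hanti ?_).ne' hv.symm
    rw [lagPoly_completeG_succ, ← hv, zero_mul, add_zero]
    rw [hD, ← hv, zero_mul, add_zero] at hxE
    exact hK.trans hxE.ge

/-- Compare with the weighting of `[n+1]^(3)` obtained by merging vertex `n + 1` into `n`. -/
theorem lagPoly_nonLink_le_of_merge (hE : E ⊆ (range (n + 2)).powersetCard 3)
    (hcl : (range n).powersetCard 3 ⊆ E) (hx : IsWeighting (n + 2) x) (hxE : lagPoly E x = lag E)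
    (hK : lag (completeG (n + 1) 3) ≤ lag E) :
    x n * lagPoly (nonLink E (range n) n) x + x (n + 1) * lagPoly (nonLink E (range n) (n + 1)) x
      ≤ x n * x (n + 1) * ∑ i ∈ pairLink E n, x i := by
  set z := x + Pi.single n (x (n + 1)) - Pi.single (n + 1) (x (n + 1))
  have hz := hx.add_single_sub_single (k := n) (l := n + 1) (by omega) (by omega) (hx.1 _) le_rfl
  have hzx : ∀ r, ∀ e ∈ (range n).powersetCard r, ∀ i ∈ e, z i = x i := fun r e he i hi => by
    have := mem_range.1 ((mem_powersetCard.1 he).1 hi)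
    simp [z, Pi.single_eq_of_ne (show i ≠ n by omega),
      Pi.single_eq_of_ne (show i ≠ n + 1 by omega)]
  have hle : lagPoly (completeG (n + 1) 3) z ≤ lagPoly E x :=
    (lagPoly_le_lag _ hz).trans (hK.trans hxE.ge)
  rw [lagPoly_completeG_succ, lagPoly_congr _ (hzx 3), lagPoly_congr _ (hzx 2),
    lagPoly_eq_of_subset_powersetCard x hE hcl, show z n = x n + x (n + 1) by simp [z]] at hle
  have h₁ := lagPoly_link_add_lagPoly_nonLink E (range n) n x
  have h₂ := lagPoly_link_add_lagPoly_nonLink E (range n) (n + 1) x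
  linear_combination hle + x n * h₁ + x (n + 1) * h₂

theorem LeftCompressed.sum_pairLink_lt (hlc : LeftCompressed E) (hx : ∀ i, 0 ≤ x i)
    (hpos : ∀ i < n, 0 < x i) (hC : (nonLink E (range n) (n + 1)).Nonempty) :
    ∑ i ∈ pairLink E n, x i < ∑ i ∈ range n, x i := by
  obtain ⟨q, hq⟩ := hC
  obtain ⟨hqP, hqE⟩ := mem_filter.1 hq
  obtain ⟨hqs, hcard⟩ := mem_powersetCard.1 hqP
  obtain ⟨a, b, hab, rfl⟩ := card_eq_two.1 hcard
  have ha : a < n := mem_range.1 (hqs (by simp))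
  have hb : b < n := mem_range.1 (hqs (by simp))
  have haB : a ∉ pairLink E n := fun haB => hqE <| by
    convert hlc.insert_mem_of_triple_mem ha (mem_filter.1 haB).2 (q := {b, n + 1})
      (fun i hi => by simp at hi; simp; omega) (card_pair (by omega)) (by simp; omega) using 1
    ext; simp; omega
  exact sum_lt_sum_of_subset (filter_subset _ _) (mem_range.2 ha) haB (hpos a ha)
    fun i _ _ => hx i

section Optimal

variable (hE : E ⊆ (range (n + 2)).powersetCard 3) (hx : IsWeighting (n + 2) x)
  (hxE : lagPoly E x = lag E)
include hE hx hxE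

theorem lagPoly_nonLink_last_eq (hv : 0 < x n) (hu : 0 < x (n + 1)) :
    lagPoly (nonLink E (range n) (n + 1)) x
      = lagPoly (nonLink E (range n) n) x + (x n - x (n + 1)) * ∑ i ∈ pairLink E n, x i := by
  have h := partialLag_eq_of_isMax (k := n) (l := n + 1) hx
    (fun w hw => hxE ▸ lagPoly_le_lag E hw) (by omega) (by omega) hv hu
  rw [partialLag_penultimate x hE, partialLag_last x hE] at h
  have h₁ := lagPoly_link_add_lagPoly_nonLink E (range n) n x
  have h₂ := lagPoly_link_add_lagPoly_nonLink E (range n) (n + 1) x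
  linear_combination h₂ - h₁ + h

theorem lagPoly_nonLink_penultimate_eq (hlc : LeftCompressed E) (hv : 0 < x n) {k : ℕ}
    (hk : k ∈ pairLink E n) (hxk : 0 < x k) :
    lagPoly (nonLink E (range n) n) x
      = (x k - x n - x (n + 1)) * (∑ i ∈ range n, x i - x k) - x n * x (n + 1)
        + x (n + 1) * ∑ i ∈ pairLink E n, x i := by
  have hkn : k ∈ range n := (mem_filter.1 hk).1
  have h := partialLag_eq_of_isMax hx (fun w hw => hxE ▸ lagPoly_le_lag E hw)
    (by simp at hkn; omega) (by omega) hxk hv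
  rw [partialLag_of_mem_pairLink x hE hlc hk, partialLag_penultimate x hE] at h
  have h₁ := lagPoly_link_add_lagPoly_nonLink E (range n) n x
  have h₂ := lagPoly_powersetCard_two_eq hkn x
  have h₃ := sum_erase_add _ x hkn
  linear_combination h₁ + h₂ + h + (x k - x n - x (n + 1)) * h₃

theorem weight_eq_of_mem_pairLink (hlc : LeftCompressed E) (hpos : ∀ i < n + 2, 0 < x i)
    {k k' : ℕ} (hk : k ∈ pairLink E n) (hk' : k' ∈ pairLink E n) : x k = x k' := by
  have hkn : k < n := mem_range.1 (mem_filter.1 hk).1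
  have hk'n : k' < n := mem_range.1 (mem_filter.1 hk').1
  by_contra hne
  have hv := hpos n (by omega)
  have hΓ := lagPoly_nonLink_penultimate_eq hE hx hxE hlc hv hk (hpos k (by omega))
  have hΓ' := lagPoly_nonLink_penultimate_eq hE hx hxE hlc hv hk' (hpos k' (by omega))
  have hpair : x k + x k' ≤ ∑ i ∈ pairLink E n, x i := by
    rw [← sum_pair fun h => hne (congrArg x h)]
    exact sum_le_sum_of_subset_of_nonneg (insert_subset hk (singleton_subset_iff.2 hk'))
      fun i _ _ => hx.1 i
  have hB : ∑ i ∈ pairLink E n, x i ≤ ∑ i ∈ range n, x i :=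
    sum_le_sum_of_subset_of_nonneg (filter_subset _ _) fun i _ _ => hx.1 i
  have : (x k - x k') * (∑ i ∈ range n, x i + x n + x (n + 1) - x k - x k') = 0 := by
    linear_combination hΓ' - hΓ
  rcases mul_eq_zero.1 this with h | h
  · exact hne (sub_eq_zero.1 h)
  · linarith [hpos (n + 1) (by omega)]

variable (hcl : (range n).powersetCard 3 ⊆ E) (hK : lag (completeG (n + 1) 3) ≤ lag E)
  (hv : 0 < x n) (hu : 0 < x (n + 1))
include hcl hK hv hu

theorem lagPoly_nonLink_penultimate_le :
    (x n + x (n + 1)) * lagPoly (nonLink E (range n) n) x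
      ≤ x (n + 1) ^ 2 * ∑ i ∈ pairLink E n, x i := by
  linear_combination lagPoly_nonLink_le_of_merge hE hcl hx hxE hK
    - x (n + 1) * lagPoly_nonLink_last_eq hE hx hxE hv hu

theorem card_nonLink_mul_le (hanti : Antitone x) :
    (nonLink E (range n) (n + 1)).card * (x n + x (n + 1)) ≤ ∑ i ∈ pairLink E n, x i := by
  have hC := card_mul_pow_le_lagPoly (F := nonLink E (range n) (n + 1)) (r := 2) (x := x)
    (fun e he => (mem_powersetCard.1 (mem_filter.1 he).1).2) (hx.1 n) fun e he i hi =>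
      hanti (mem_range.1 ((mem_powersetCard.1 (mem_filter.1 he).1).1 hi)).le
  have hE4 : (x n + x (n + 1)) * lagPoly (nonLink E (range n) (n + 1)) x
      ≤ x n ^ 2 * ∑ i ∈ pairLink E n, x i := by
    linear_combination lagPoly_nonLink_le_of_merge hE hcl hx hxE hK
      + x n * lagPoly_nonLink_last_eq hE hx hxE hv hu
  have hv2 : 0 < x n ^ 2 := by positivity
  nlinarith

end Optimal

end Argument

theorem lt_of_lagrange_identity {b y v u σ Γ : ℝ} (hb : 1 ≤ b) (hu : 0 < u) (huv : u ≤ v)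
    (hσ : b * y < σ)
    (hΓ : Γ = (y - v - u) * (σ - y) - v * u + u * (b * y))
    (hV : (b + 1) * (v + u) ≤ b * y) : u ^ 2 * (b * y) < (v + u) * Γ := by
  have hd : u < y - v := by nlinarith
  have hΓd : Γ - (y - v) * ((b - 1) * y + u) = (y - v - u) * (σ - b * y) := by rw [hΓ]; ring
  have h₁ : (y - v) * ((b - 1) * y + u) < Γ := by
    nlinarith [mul_pos (sub_pos.2 hd) (sub_pos.2 hσ)]
  have h₂ : u ^ 2 * (b * y) ≤ (v + u) * ((y - v) * ((b - 1) * y + u)) := by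
    have hy : 0 < y := by linarith
    have hexp : (v + u) * ((y - v) * ((b - 1) * y + u)) - u ^ 2 * (b * y)
        = u * v * (y - v - u) + (b - 1) * y * ((v + u) * (y - v) - u ^ 2) := by ring
    have : u ^ 2 ≤ (v + u) * (y - v) := by nlinarith
    nlinarith [mul_nonneg (mul_nonneg hu.le (hu.le.trans huv)) (sub_nonneg.2 hd.le),
      mul_nonneg (mul_nonneg (sub_nonneg.2 hb) hy.le) (sub_nonneg.2 this)]
  nlinarith

theorem LeftCompressed.card_nonLink_le_card_pairLink {n : ℕ} {E : Finset (Finset ℕ)}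
    (hlc : LeftCompressed E) (hE : E ⊆ (range (n + 2)).powersetCard 3)
    (hcl : (range n).powersetCard 3 ⊆ E)
    (hmaxcl : ∀ s : Finset ℕ, s.powersetCard 3 ⊆ E → s.card ≤ n) (hn : 2 ≤ n)
    (hK : lag (completeG (n + 1) 3) ≤ lag E) :
    (nonLink E (range n) (n + 1)).card ≤ (pairLink E n).card := by
  by_contra! hlt
  obtain ⟨x, hx, hanti, hxE⟩ := hlc.exists_antitone_lagPoly_eq_lag
    (fun e he => (mem_powersetCard.1 (hE he)).1) (by omega)
  have hu := hlc.weight_last_pos hE hcl hmaxcl hn hx hanti hxE hK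
  have hpos : ∀ i < n + 2, 0 < x i := fun i hi => hu.trans_le (hanti (by omega))
  have hv := hpos n (by omega)
  have hV := card_nonLink_mul_le hE hx hxE hcl hK hv hu hanti
  have hS := hlc.sum_pairLink_lt (n := n) hx.1 (fun i hi => hpos i (by omega))
    (card_pos.1 (by omega))
  rcases (pairLink E n).eq_empty_or_nonempty with hB | ⟨k, hk⟩
  · rw [hB, sum_empty] at hV
    have : (0 : ℝ) < (nonLink E (range n) (n + 1)).card := by exact_mod_cast (by omega : 0 < _)
    nlinarith
  have hSb : ∑ i ∈ pairLink E n, x i = (pairLink E n).card * x k := by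
    rw [sum_congr rfl fun i hi => weight_eq_of_mem_pairLink hE hx hxE hlc hpos hi hk, sum_const,
      nsmul_eq_mul]
  have hcard : ((pairLink E n).card : ℝ) + 1 ≤ (nonLink E (range n) (n + 1)).card := by
    exact_mod_cast hlt
  have hkn : k < n + 2 := (mem_range.1 (mem_filter.1 hk).1).trans (by omega)
  refine (lt_of_lagrange_identity (by exact_mod_cast card_pos.2 ⟨k, hk⟩) hu (hanti n.le_succ)
    (hSb ▸ hS) (hSb ▸ lagPoly_nonLink_penultimate_eq hE hx hxE hlc hv hk (hpos k hkn))
    (hSb ▸ by nlinarith)).not_ge (hSb ▸ lagPoly_nonLink_penultimate_le hE hx hxE hcl hK hv hu)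

theorem stmt_16_general (t : ℕ)
    (E : Finset (Finset ℕ)) (hE : E ⊆ (Finset.range t).powersetCard 3)
    (hlc : LeftCompressed E)
    (hcl : completeG (t - 2) 3 ⊆ E)
    (hmaxcl : ∀ s : Finset ℕ, s.powersetCard 3 ⊆ E → s.card ≤ t - 2) :
    lag E < lag (completeG (t - 1) 3) ∨
    (((Finset.range (t - 2)).powersetCard 2).filter
        (fun p => insert (t - 1) p ∉ E)).card ≤
      ((Finset.range (t - 2)).filter
        (fun i => ({i, t - 2, t - 1} : Finset ℕ) ∈ E)).card := by
  have ht : 4 ≤ t := by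
    have := hmaxcl {0, 1} (by rw [powersetCard_eq_empty.2 (by simp)]; exact empty_subset E)
    rw [card_pair (by simp)] at this
    omega
  obtain ⟨n, rfl⟩ : ∃ n, t = n + 2 := ⟨t - 2, by omega⟩
  simp only [Nat.add_sub_cancel, show n + 2 - 1 = n + 1 by omega] at hcl hmaxcl ⊢
  exact (lt_or_ge _ _).imp_right
    (hlc.card_nonLink_le_card_pairLink hE hcl hmaxcl (by omega))

/-- For a left-compressed 3-graph on [t] with m edges, maximum clique [t-2]^{(3)},
attaining λ^3_{(m,t-2)}, with b = |E_{(t-1)t}|: either λ(G) < λ([t-1]^{(3)}) or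
|[t-2]^{(2)} \ E_t| ≤ b. (Vertices 0,…,t-1.) -/
theorem stmt_16 (m t : ℕ)
    (h₁ : (t - 1).choose 3 ≤ m)
    (h₂ : (m : ℝ) ≤ ((t - 1).choose 3 : ℝ) + ((t - 2).choose 2 : ℝ) - ((t : ℝ) - 2) / 2)
    (E : Finset (Finset ℕ)) (hE : E ⊆ (Finset.range t).powersetCard 3)
    (hmE : E.card = m) (hlc : LeftCompressed E)
    (hcl : completeG (t - 2) 3 ⊆ E)
    (hmaxcl : ∀ s : Finset ℕ, s.powersetCard 3 ⊆ E → s.card ≤ t - 2)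
    (hopt : ∀ E' : Finset (Finset ℕ), (∀ e ∈ E', e.card = 3) → E'.card = m →
      (∃ s : Finset ℕ, s.card = t - 2 ∧ s.powersetCard 3 ⊆ E') →
      (∀ s : Finset ℕ, s.powersetCard 3 ⊆ E' → s.card ≤ t - 2) →
      lag E' ≤ lag E) :
    lag E < lag (completeG (t - 1) 3) ∨
    (((Finset.range (t - 2)).powersetCard 2).filter
        (fun p => insert (t - 1) p ∉ E)).card ≤
      ((Finset.range (t - 2)).filter
        (fun i => ({i, t - 2, t - 1} : Finset ℕ) ∈ E)).card :=
  stmt_16_general t E hE hlc hcl hmaxcl
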